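/- For α ≥ -1/2 and n ∈ ℕ, the one-dimensional generalized Hermite function h_n^α is an eigenfunction of the Dunkl harmonic oscillator L_α = -((T^α)²) + x²: namely L_α h_n^α = (2n + 2α + 2) h_n^α. -/

import Mathlib

/-!
Writing `h_n^α` as `u(x²)` (n even) or `x u(x²)` (n odd) with `u(y) = c e^{-y/2} L(y)`, the
Dunkl oscillator `L_α` becomes, in the variable `y = x²`, the operator
`u ↦ -4y u'' - 4(β+1) u' + y u` with `β = α` resp. `β = α + 1`: even functions are mapped by
`T^α` to ordinary derivatives, and for odd `f` the reflection term is `(2α+1) f(x)/x`. Conjugating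
by the Gaussian turns this operator into `-4 (y L'' + (β+1-y) L') + 2(β+1) L`, and Laguerre's
equation `y L'' + (β+1-y) L' = -m L` for `L = L_m^β` gives the eigenvalue `4m + 2β + 2`.
-/

noncomputable def laguerre (α : ℝ) (n : ℕ) (x : ℝ) : ℝ :=
  ∑ k ∈ Finset.range (n + 1),
    (-1 : ℝ) ^ k * (Real.Gamma (n + α + 1) / ((Nat.factorial (n - k)) * Real.Gamma (α + k + 1)))
      * x ^ k / (Nat.factorial k)

noncomputable def hfun (α : ℝ) (n : ℕ) (x : ℝ) : ℝ :=
  if n % 2 = 0 then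
    (-1 : ℝ) ^ (n / 2) * Real.sqrt (Nat.factorial (n / 2) / Real.Gamma (n / 2 + α + 1)) *
      Real.exp (-x ^ 2 / 2) * laguerre α (n / 2) (x ^ 2)
  else
    (-1 : ℝ) ^ (n / 2) * Real.sqrt (Nat.factorial (n / 2) / Real.Gamma (n / 2 + α + 2)) *
      Real.exp (-x ^ 2 / 2) * x * laguerre (α + 1) (n / 2) (x ^ 2)

/-- The one-dimensional Dunkl operator of parameter α + 1/2. -/
noncomputable def dunklT (α : ℝ) (f : ℝ → ℝ) (x : ℝ) : ℝ :=
  deriv f x + (α + 1/2) * (f x - f (-x)) / x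

open Polynomial Real

noncomputable def laguerreCoeff (α : ℝ) (n k : ℕ) : ℝ :=
  (-1 : ℝ) ^ k * (Gamma (n + α + 1) / ((n - k).factorial * Gamma (α + k + 1))) / k.factorial

noncomputable def laguerrePoly (α : ℝ) (n : ℕ) : ℝ[X] :=
  ∑ k ∈ Finset.range (n + 1), C (laguerreCoeff α n k) * X ^ k

theorem laguerre_eq_eval (α : ℝ) (n : ℕ) : laguerre α n = fun x => (laguerrePoly α n).eval x := by
  funext x
  simp only [laguerre, laguerrePoly, laguerreCoeff, eval_finsetSum, eval_mul, eval_C, eval_pow,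
    eval_X]
  exact Finset.sum_congr rfl fun k _ => by ring

@[fun_prop]
theorem contDiff_laguerre (α : ℝ) (n : ℕ) {k : WithTop ℕ∞} : ContDiff ℝ k (laguerre α n) := by
  unfold laguerre
  fun_prop

theorem coeff_laguerrePoly (α : ℝ) (n k : ℕ) :
    (laguerrePoly α n).coeff k = if k ≤ n then laguerreCoeff α n k else 0 := by
  simp [laguerrePoly]

theorem laguerreCoeff_recurrence {α : ℝ} (hα : -1 < α) {n k : ℕ} (hk : k < n) :
    (k + 1) * (k + 1 + α) * laguerreCoeff α n (k + 1) + (n - k) * laguerreCoeff α n k = 0 := by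
  have hpos : 0 < α + k + 1 := by linarith [(k.cast_nonneg : (0 : ℝ) ≤ k)]
  obtain ⟨j, rfl⟩ := Nat.exists_eq_add_of_lt hk
  have hΓ : Gamma (α + (k + 1 : ℕ) + 1) = (α + k + 1) * Gamma (α + k + 1) := by
    rw [← Gamma_add_one hpos.ne']
    push_cast
    ring_nf
  have hΓpos : 0 < Gamma (α + k + 1) := Gamma_pos_of_pos hpos
  simp only [laguerreCoeff, hΓ, show k + j + 1 - k = j + 1 by omega,
    show k + j + 1 - (k + 1) = j by omega, Nat.factorial_succ, pow_succ]
  push_cast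
  field_simp
  ring

theorem laguerre_ode_of_coeff_recurrence {α ν : ℝ} {p : ℝ[X]}
    (h : ∀ k : ℕ, (k + 1) * (k + 1 + α) * p.coeff (k + 1) + (ν - k) * p.coeff k = 0) :
    X * derivative (derivative p) + (C (α + 1) - X) * derivative p + C ν * p = 0 := by
  ext k
  rcases k with _ | k
  · simp [coeff_derivative]
    linear_combination h 0
  · simp only [coeff_add, coeff_sub, sub_mul, coeff_X_mul, coeff_C_mul, coeff_derivative,
      coeff_zero]
    have hk := h (k + 1)
    push_cast at hk ⊢
    linear_combination hk

theorem laguerrePoly_ode {α : ℝ} (hα : -1 < α) (n : ℕ) :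
    X * derivative (derivative (laguerrePoly α n)) + (C (α + 1) - X) * derivative (laguerrePoly α n)
      + C (n : ℝ) * laguerrePoly α n = 0 := by
  refine laguerre_ode_of_coeff_recurrence fun k => ?_
  simp only [coeff_laguerrePoly]
  rcases lt_trichotomy k n with hk | rfl | hk
  · simp only [if_pos hk.le, if_pos (Nat.succ_le_of_lt hk), laguerreCoeff_recurrence hα hk]
  · simp
  · simp [hk.not_ge, (hk.trans (Nat.lt_succ_self k)).not_ge]

noncomputable def dunklOscillator (α : ℝ) (f : ℝ → ℝ) (x : ℝ) : ℝ :=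
  -dunklT α (dunklT α f) x + x ^ 2 * f x

noncomputable def radialOp (α : ℝ) (u : ℝ → ℝ) (y : ℝ) : ℝ :=
  -4 * y * deriv (deriv u) y - 4 * (α + 1) * deriv u y + y * u y

section Dunkl

variable {α x : ℝ} {f g u : ℝ → ℝ}

theorem dunklT_of_even (hf : Function.Even f) : dunklT α f = deriv f := by
  funext y
  simp [dunklT, hf y]

theorem dunklT_congr_of_ne_zero (hfg : ∀ y ≠ 0, f y = g y) (hx : x ≠ 0) :
    dunklT α f x = dunklT α g x := by
  have hev : f =ᶠ[nhds x] g := (eventually_ne_nhds hx).mono hfg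
  simp only [dunklT, hev.deriv_eq, hfg x hx, hfg (-x) (neg_ne_zero.2 hx)]

theorem hasDerivAt_comp_sq (hu : Differentiable ℝ u) (y : ℝ) :
    HasDerivAt (fun y => u (y ^ 2)) (2 * y * deriv u (y ^ 2)) y :=
  ((hu (y ^ 2)).hasDerivAt.comp y (hasDerivAt_pow 2 y)).congr_deriv (by norm_num; ring)

theorem dunklOscillator_comp_sq (hu : ContDiff ℝ 2 u) (hx : x ≠ 0) :
    dunklOscillator α (fun y => u (y ^ 2)) x = radialOp α u (x ^ 2) := by
  have hTf : (dunklT α fun y => u (y ^ 2)) = fun y => 2 * y * deriv u (y ^ 2) := by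
    rw [dunklT_of_even fun y => by simp only [neg_sq]]
    exact funext fun y => (hasDerivAt_comp_sq (hu.differentiable two_ne_zero) y).deriv
  have hTTf := ((hasDerivAt_id' x).const_mul 2).fun_mul
    (hasDerivAt_comp_sq hu.differentiable_deriv_two x)
  rw [dunklOscillator, hTf, dunklT, hTTf.deriv, radialOp, neg_sq]
  field_simp
  ring

theorem dunklOscillator_mul_comp_sq (hu : ContDiff ℝ 2 u) (hx : x ≠ 0) :
    dunklOscillator α (fun y => y * u (y ^ 2)) x = x * radialOp (α + 1) u (x ^ 2) := by
  have hu₀ := hu.differentiable two_ne_zero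
  set v : ℝ → ℝ := fun y => 2 * y ^ 2 * deriv u (y ^ 2) + (2 * α + 2) * u (y ^ 2)
  -- `T^α (y u(y²))` differs from `v` at `0`, so the two agree only near `x`.
  have hTf : ∀ y ≠ 0, dunklT α (fun y => y * u (y ^ 2)) y = v y := by
    intro y hy
    rw [dunklT, ((hasDerivAt_id' y).fun_mul (hasDerivAt_comp_sq hu₀ y)).deriv, neg_sq]
    field_simp
    ring
  have hg := (((hasDerivAt_pow 2 x).const_mul 2).fun_mul
    (hasDerivAt_comp_sq hu.differentiable_deriv_two x)).fun_add
      ((hasDerivAt_comp_sq hu₀ x).const_mul (2 * α + 2))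
  rw [dunklOscillator, dunklT_congr_of_ne_zero hTf hx,
    dunklT_of_even fun y => by simp only [v, neg_sq], hg.deriv, radialOp]
  ring

end Dunkl

section Radial

variable {β : ℝ}

theorem radialOp_const_mul (c : ℝ) (u : ℝ → ℝ) (y : ℝ) :
    radialOp β (fun y => c * u y) y = c * radialOp β u y := by
  simp only [radialOp, deriv_const_mul_field']
  ring

theorem deriv_gaussian_mul_eval (P : ℝ[X]) :
    deriv (fun y => exp (-y / 2) * P.eval y)
      = fun y => exp (-y / 2) * (derivative P - C (1 / 2) * P).eval y := by
  funext y
  have hexp := ((hasDerivAt_id' y).fun_neg.div_const 2).exp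
  rw [(hexp.fun_mul (P.hasDerivAt y)).deriv]
  simp only [eval_sub, eval_mul, eval_C]
  ring

theorem radialOp_gaussian_mul_eval_of_ode {ν : ℝ} {P : ℝ[X]}
    (hP : X * derivative (derivative P) + (C (β + 1) - X) * derivative P + C ν * P = 0) (y : ℝ) :
    radialOp β (fun y => exp (-y / 2) * P.eval y) y
      = (4 * ν + 2 * β + 2) * (exp (-y / 2) * P.eval y) := by
  have hode := congrArg (eval y) hP
  simp only [eval_add, eval_mul, eval_sub, eval_X, eval_C, eval_zero] at hode
  rw [radialOp, deriv_gaussian_mul_eval, deriv_gaussian_mul_eval]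
  simp only [derivative_sub, derivative_mul, derivative_C, eval_sub, eval_add, eval_mul, eval_C,
    eval_zero]
  linear_combination (-4 * exp (-y / 2)) * hode

theorem radialOp_gaussian_mul_laguerre (hβ : -1 < β) (n : ℕ) (c y : ℝ) :
    radialOp β (fun y => c * (exp (-y / 2) * laguerre β n y)) y
      = (4 * n + 2 * β + 2) * (c * (exp (-y / 2) * laguerre β n y)) := by
  rw [radialOp_const_mul, laguerre_eq_eval,
    radialOp_gaussian_mul_eval_of_ode (laguerrePoly_ode hβ n)]
  ring

end Radial

theorem exists_hfun_two_mul_eq (α : ℝ) (m : ℕ) :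
    ∃ κ : ℝ, hfun α (2 * m) = fun x => κ * (exp (-x ^ 2 / 2) * laguerre α m (x ^ 2)) := by
  refine ⟨(-1 : ℝ) ^ m * √(m.factorial / Gamma ((2 * m : ℕ) / 2 + α + 1)), funext fun x => ?_⟩
  rw [hfun, if_pos (by omega), Nat.mul_div_cancel_left m two_pos]
  ring

theorem exists_hfun_two_mul_add_one_eq (α : ℝ) (m : ℕ) :
    ∃ κ : ℝ, hfun α (2 * m + 1)
      = fun x => x * (κ * (exp (-x ^ 2 / 2) * laguerre (α + 1) m (x ^ 2))) := by
  refine ⟨(-1 : ℝ) ^ m * √(m.factorial / Gamma ((2 * m + 1 : ℕ) / 2 + α + 2)), funext fun x => ?_⟩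
  rw [hfun, if_neg (by omega), show (2 * m + 1) / 2 = m by omega]
  ring

theorem hfun_eigenfunction (α : ℝ) (hα : -1/2 ≤ α) (n : ℕ) (x : ℝ) (hx : x ≠ 0) :
    -(dunklT α (dunklT α (hfun α n)) x) + x ^ 2 * hfun α n x
      = (2 * n + 2 * α + 2) * hfun α n x := by
  change dunklOscillator α (hfun α n) x = _
  obtain ⟨m, rfl | rfl⟩ := Nat.even_or_odd' n
  · obtain ⟨κ, hκ⟩ := exists_hfun_two_mul_eq α m
    have hu : ContDiff ℝ 2 fun y => κ * (exp (-y / 2) * laguerre α m y) := by fun_prop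
    rw [hκ, dunklOscillator_comp_sq hu hx,
      radialOp_gaussian_mul_laguerre (by linarith) m κ]
    push_cast
    ring
  · obtain ⟨κ, hκ⟩ := exists_hfun_two_mul_add_one_eq α m
    have hu : ContDiff ℝ 2 fun y => κ * (exp (-y / 2) * laguerre (α + 1) m y) := by fun_prop
    rw [hκ, dunklOscillator_mul_comp_sq hu hx,
      radialOp_gaussian_mul_laguerre (by linarith) m κ]
    push_cast
    ring
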